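/- Let U be an n-molecule in a regular directed complex and x ∈ U an n-dimensional element. Then there is a finite sequence x = x₀ → y₀ → x₁ → ... → xₘ → yₘ of elements of U such that each xᵢ is n-dimensional, each yᵢ is (n−1)-dimensional, yᵢ ∈ Δ^+ xᵢ ∩ Δ^− xᵢ₊₁ for i < m, and yₘ ∈ Δ^+ U. -/

import Mathlib

/-- An oriented graded poset: a finite graded poset together with an
orientation (edge-labelling of the Hasse diagram in `Bool`, `true` = `+`,
`false` = `-`).  `orient y x` is the label of the edge `y → x` when `x ⋖ y`. -/
structure OGP where
  carrier : Type
  [po : PartialOrder carrier]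
  [fin : Finite carrier]
  dim : carrier → ℕ
  graded : ∀ x y : carrier, x ⋖ y → dim y = dim x + 1
  min_dim : ∀ x : carrier, IsMin x → dim x = 0
  orient : carrier → carrier → Bool

attribute [instance] OGP.po OGP.fin

namespace OGP

variable (P : OGP)

/-- Downward closure of a subset. -/
def cl (U : Set P.carrier) : Set P.carrier := {x | ∃ y ∈ U, x ≤ y}

/-- A subset is closed if it is downward closed. -/
def IsClosed (U : Set P.carrier) : Prop := P.cl U ⊆ U

/-- `Δₙ^α U`: the `n`-dimensional elements of `U` all of whose covering
elements in `U` cover with sign `α`. -/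
def sb (n : ℕ) (α : Bool) (U : Set P.carrier) : Set P.carrier :=
  {x | x ∈ U ∧ P.dim x = n ∧ ∀ y ∈ U, x ⋖ y → P.orient y x = α}

/-- The boundary `∂ₙ^α U`. -/
def bd (n : ℕ) (α : Bool) (U : Set P.carrier) : Set P.carrier :=
  P.cl (P.sb n α U) ∪ {x | x ∈ U ∧ ∀ y ∈ U, x ≤ y → P.dim y ≤ n}

/-- Dimension of a subset (the maximum of the dimensions of its elements;
`0` if empty). -/
noncomputable def sdim (U : Set P.carrier) : ℕ := sSup (P.dim '' U)

end OGP

/-- A map of oriented graded posets: a function commuting with all boundary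
operators `∂ₙ^α` on closures of points. -/
def IsMap (P Q : OGP) (f : P.carrier → Q.carrier) : Prop :=
  ∀ (x : P.carrier) (n : ℕ) (α : Bool),
    Q.bd n α (Q.cl {f x}) = f '' (P.bd n α (P.cl {x}))

/-- Molecules in an oriented graded poset, defined inductively: atoms
(closed subsets with a greatest element), and pastings `U₁ ∪ U₂` of two
molecules properly contained in the union with
`U₁ ∩ U₂ = ∂ₖ^+ U₁ = ∂ₖ^- U₂`. -/
inductive IsMolecule (P : OGP) : Set P.carrier → Prop
  | atom : ∀ U : Set P.carrier, P.IsClosed U → (∃ x ∈ U, ∀ y ∈ U, y ≤ x) →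
      IsMolecule P U
  | paste : ∀ (U₁ U₂ : Set P.carrier) (k : ℕ),
      IsMolecule P U₁ → IsMolecule P U₂ →
      U₁ ∩ U₂ = P.bd k true U₁ → U₁ ∩ U₂ = P.bd k false U₂ →
      U₁ ≠ U₁ ∪ U₂ → U₂ ≠ U₁ ∪ U₂ →
      IsMolecule P (U₁ ∪ U₂)

/-- `∂^α x`: the boundary of the closure of a single element. -/
def OGP.bdx (P : OGP) (α : Bool) (x : P.carrier) : Set P.carrier :=
  P.bd (P.dim x - 1) α (P.cl {x})

/-- A directed complex: every `∂^α x` is a molecule, and globularity holds. -/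
def IsDirectedComplex (P : OGP) : Prop :=
  ∀ (x : P.carrier) (α : Bool),
    IsMolecule P (P.bdx α x) ∧
    (1 < P.dim x → ∀ β : Bool,
      P.bd (P.dim x - 2) α (P.bdx β x) = P.bd (P.dim x - 2) α (P.cl {x}))

/-- An `n`-molecule `U` has spherical boundary iff for all `k < n`,
`∂ₖ^+ U ∩ ∂ₖ^- U = ∂ₖ₋₁ U` (for `k = 0` the right-hand side is empty). -/
def HasSphericalBoundary (P : OGP) (n : ℕ) (U : Set P.carrier) : Prop :=
  (∀ k : ℕ, 0 < k → k < n →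
      P.bd k true U ∩ P.bd k false U = P.bd (k - 1) true U ∪ P.bd (k - 1) false U) ∧
  (0 < n → P.bd 0 true U ∩ P.bd 0 false U = ∅)

/-- A regular directed complex: a directed complex all of whose atoms have
spherical boundary. -/
def IsRegularDC (P : OGP) : Prop :=
  IsDirectedComplex P ∧ ∀ x : P.carrier, HasSphericalBoundary P (P.dim x) (P.cl {x})

/-!
Induction on the pasting structure of the molecule. For an atom with greatest element `t`, the
directed-complex axiom makes `∂⁺t` a molecule, hence nonempty, which yields an output face
`y ∈ Δ⁺t = Δ⁺U`. For a pasting `U = U₁ ∪ U₂` with `U₁ ∩ U₂ = ∂ₖ⁺U₁`, proper containment forces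
`k < n`; then every `y ∈ Δ⁺U₂` stays in `Δ⁺U`, since a cover of `y` in `U₁` puts `y` in `∂ₖ⁺U₁`,
so `k = n - 1`. A zig-zag in `U₁` that ends at `y ∈ Δ⁺U₁ \ Δ⁺U` is continued through an element
of `U₂` covering `y` negatively, followed by a zig-zag in `U₂`.
-/


namespace OGP

variable {P : OGP}

theorem dim_strictMono : StrictMono P.dim := by
  classical
  have := Fintype.ofFinite P.carrier
  let := Fintype.toLocallyFiniteOrder (α := P.carrier)
  exact (strictMono_iff_forall_covBy _).2 fun x y h => by simp [P.graded x y h]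

theorem eq_of_le_of_dim_le {x y : P.carrier} (h : x ≤ y) (hd : P.dim y ≤ P.dim x) : x = y :=
  h.eq_of_not_lt fun hlt => (dim_strictMono hlt).not_ge hd

theorem covBy_of_le_of_dim_eq {x y : P.carrier} (h : x ≤ y) (hd : P.dim y = P.dim x + 1) :
    x ⋖ y := by
  obtain ⟨c, hxc, hcy⟩ := exists_le_covBy_of_lt (h.lt_of_ne fun hxy => by simp [hxy] at hd)
  rwa [eq_of_le_of_dim_le hxc (by have := P.graded c y hcy; omega)]

theorem dim_le_of_mem_bd {V : Set P.carrier} {k : ℕ} {α : Bool} {z : P.carrier}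
    (h : z ∈ P.bd k α V) : P.dim z ≤ k := by
  rcases h with ⟨w, ⟨-, hw, -⟩, hzw⟩ | ⟨hz, hmax⟩
  · exact hw ▸ dim_strictMono.monotone hzw
  · exact hmax z hz le_rfl

theorem orient_eq_of_mem_bd {V : Set P.carrier} {k : ℕ} {α : Bool} {y z : P.carrier}
    (hy : y ∈ P.bd k α V) (hdy : P.dim y = k) (hz : z ∈ V) (hyz : y ⋖ z) :
    P.orient z y = α := by
  rcases hy with ⟨w, ⟨-, hw, hcov⟩, hyw⟩ | ⟨-, hmax⟩
  · obtain rfl := eq_of_le_of_dim_le hyw (by rw [hw, hdy])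
    exact hcov z hz hyz
  · have := P.graded y z hyz
    have := hmax z hz hyz.le
    omega

theorem subset_bd_of_forall_dim_le {V : Set P.carrier} {k : ℕ} (α : Bool)
    (h : ∀ y ∈ V, P.dim y ≤ k) : V ⊆ P.bd k α V :=
  fun _ hz => Or.inr ⟨hz, fun y hy _ => h y hy⟩

@[simp]
theorem mem_cl_singleton {t z : P.carrier} : z ∈ P.cl {t} ↔ z ≤ t := by
  simp [cl]

theorem cl_singleton_eq_of_isGreatest {U : Set P.carrier} {t : P.carrier} (hU : P.IsClosed U)
    (ht : IsGreatest U t) : P.cl {t} = U :=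
  Set.Subset.antisymm (fun _ hz => hU ⟨t, ht.1, mem_cl_singleton.1 hz⟩)
    fun _ hz => mem_cl_singleton.2 (ht.2 hz)

theorem mem_sb_union_of_mem_sb_right {U₁ U₂ : Set P.carrier} {k m : ℕ} {α : Bool}
    (hU₁ : P.IsClosed U₁) (hcap : U₁ ∩ U₂ = P.bd k α U₁) (hkm : k ≤ m) {y : P.carrier}
    (hy : y ∈ P.sb m α U₂) : y ∈ P.sb m α (U₁ ∪ U₂) := by
  obtain ⟨hyU₂, hdy, hcov⟩ := hy
  refine ⟨.inr hyU₂, hdy, ?_⟩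
  rintro z (hz | hz) hyz
  · have hyk : y ∈ P.bd k α U₁ := hcap ▸ ⟨hU₁ ⟨z, hz, hyz.le⟩, hyU₂⟩
    exact orient_eq_of_mem_bd hyk (le_antisymm (dim_le_of_mem_bd hyk) (hdy ▸ hkm)) hz hyz
  · exact hcov z hz hyz

/-- A path `x = x₀ → y₀ → x₁ → ⋯ → xₘ → yₘ = y` in `U` with `yᵢ ∈ Δ⁺xᵢ ∩ Δ⁻xᵢ₊₁`. -/
inductive ZigZag (U : Set P.carrier) : P.carrier → P.carrier → Prop
  | single {x y : P.carrier} : x ∈ U → y ∈ U → y ⋖ x → P.orient x y = true → ZigZag U x y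
  | cons {x y x' y' : P.carrier} : x ∈ U → y ∈ U → y ⋖ x → P.orient x y = true →
      y ⋖ x' → P.orient x' y = false → ZigZag U x' y' → ZigZag U x y'

namespace ZigZag

variable {U V : Set P.carrier} {x y x' y' : P.carrier}

theorem mono (hUV : U ⊆ V) (h : ZigZag U x y) : ZigZag V x y := by
  induction h with
  | single hx hy hyx ho => exact single (hUV hx) (hUV hy) hyx ho
  | cons hx hy hyx ho hyx' ho' _ ih => exact cons (hUV hx) (hUV hy) hyx ho hyx' ho' ih

theorem append (h : ZigZag U x y) (hyx' : y ⋖ x') (ho : P.orient x' y = false)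
    (h' : ZigZag U x' y') : ZigZag U x y' := by
  induction h with
  | single hx hy hyx ho₁ => exact cons hx hy hyx ho₁ hyx' ho h'
  | cons hx hy hyx ho₁ hyx₁ ho₂ _ ih => exact cons hx hy hyx ho₁ hyx₁ ho₂ (ih hyx' ho)

theorem exists_seq (h : ZigZag U x y) :
    ∃ (m : ℕ) (xs ys : ℕ → P.carrier), xs 0 = x ∧ ys m = y ∧
      (∀ i ≤ m, xs i ∈ U ∧ P.dim (xs i) = P.dim x ∧ ys i ∈ U ∧ P.dim (ys i) = P.dim x - 1 ∧
        ys i ⋖ xs i ∧ P.orient (xs i) (ys i) = true) ∧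
      (∀ i < m, ys i ⋖ xs (i + 1) ∧ P.orient (xs (i + 1)) (ys i) = false) := by
  induction h with
  | @single x y hx hy hyx ho =>
    have hdy : P.dim y = P.dim x - 1 := by have := P.graded y x hyx; omega
    exact ⟨0, fun _ => x, fun _ => y, rfl, rfl,
      fun _ _ => ⟨hx, rfl, hy, hdy, hyx, ho⟩, fun _ hi => absurd hi (Nat.not_lt_zero _)⟩
  | @cons x y x' y' hx hy hyx ho hyx' ho' _ ih =>
    obtain ⟨m, xs, ys, rfl, rfl, hsteps, hlinks⟩ := ih
    have hdx' : P.dim (xs 0) = P.dim x := by rw [P.graded y x hyx, P.graded y _ hyx']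
    have hdy : P.dim y = P.dim x - 1 := by have := P.graded y x hyx; omega
    refine ⟨m + 1, fun | 0 => x | i + 1 => xs i, fun | 0 => y | i + 1 => ys i, rfl, rfl, ?_, ?_⟩
    · rintro (_ | i) hi
      · exact ⟨hx, rfl, hy, hdy, hyx, ho⟩
      · simpa only [hdx'] using hsteps i (by omega)
    · rintro (_ | i) hi
      · exact ⟨hyx', ho'⟩
      · exact hlinks i (by omega)

end ZigZag

end OGP

open OGP

section

variable {P : OGP}

theorem IsMolecule.isClosed {U : Set P.carrier} (h : IsMolecule P U) : P.IsClosed U := by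
  induction h with
  | atom U hU _ => exact hU
  | paste U₁ U₂ _ _ _ _ _ _ _ ih₁ ih₂ =>
    rintro z ⟨w, hw | hw, hzw⟩
    · exact Or.inl (ih₁ ⟨w, hw, hzw⟩)
    · exact Or.inr (ih₂ ⟨w, hw, hzw⟩)

theorem IsMolecule.nonempty {U : Set P.carrier} (h : IsMolecule P U) : U.Nonempty := by
  induction h with
  | atom U _ hg => obtain ⟨x, hx, _⟩ := hg; exact ⟨x, hx⟩
  | paste U₁ U₂ _ _ _ _ _ _ _ ih₁ _ => exact ih₁.mono Set.subset_union_left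

theorem IsDirectedComplex.sb_nonempty (hP : IsDirectedComplex P) (α : Bool) {t : P.carrier}
    (ht : 0 < P.dim t) : (P.sb (P.dim t - 1) α (P.cl {t})).Nonempty := by
  obtain ⟨w, hw⟩ := (hP t α).1.nonempty
  rcases hw with ⟨y, hy, -⟩ | ⟨hwt, hmax⟩
  · exact ⟨y, hy⟩
  · have := hmax t (mem_cl_singleton.2 le_rfl) (mem_cl_singleton.1 hwt)
    omega

theorem exists_zigZag_of_isGreatest (hP : IsDirectedComplex P) {U : Set P.carrier}
    (hU : P.IsClosed U) {t : P.carrier} (ht : IsGreatest U t) (hdt : 0 < P.dim t) :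
    ∃ y ∈ P.sb (P.dim t - 1) true U, ZigZag U t y := by
  obtain ⟨y, hy⟩ := hP.sb_nonempty true hdt
  rw [cl_singleton_eq_of_isGreatest hU ht] at hy
  have hyt : y ⋖ t := covBy_of_le_of_dim_eq (ht.2 hy.1) (by rw [hy.2.1]; omega)
  exact ⟨y, hy, .single ht.1 hy.1 hyt (hy.2.2 t ht.1 hyt)⟩

theorem exists_zigZag_union {U₁ U₂ : Set P.carrier} {k n : ℕ} (hU₁ : P.IsClosed U₁)
    (hcap : U₁ ∩ U₂ = P.bd k true U₁) (hne : U₂ ≠ U₁ ∪ U₂) (hd : ∀ y ∈ U₁, P.dim y ≤ n)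
    (ih₁ : ∀ x ∈ U₁, P.dim x = n → ∃ y ∈ P.sb (n - 1) true U₁, ZigZag U₁ x y)
    (ih₂ : ∀ x ∈ U₂, P.dim x = n → ∃ y ∈ P.sb (n - 1) true U₂, ZigZag U₂ x y)
    {x : P.carrier} (hx : x ∈ U₁ ∪ U₂) (hdx : P.dim x = n) :
    ∃ y ∈ P.sb (n - 1) true (U₁ ∪ U₂), ZigZag (U₁ ∪ U₂) x y := by
  have hkn : k < n := by
    by_contra! hnk
    refine hne (Set.union_eq_self_of_subset_left ?_).symm
    calc U₁ ⊆ P.bd k true U₁ := subset_bd_of_forall_dim_le true fun y hy => (hd y hy).trans hnk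
      _ = U₁ ∩ U₂ := hcap.symm
      _ ⊆ U₂ := Set.inter_subset_right
  have hout : ∀ y ∈ P.sb (n - 1) true U₂, y ∈ P.sb (n - 1) true (U₁ ∪ U₂) :=
    fun y => mem_sb_union_of_mem_sb_right hU₁ hcap (by omega)
  rcases hx with hx₁ | hx₂
  · obtain ⟨y, ⟨hyU₁, hdy, hy⟩, hxy⟩ := ih₁ x hx₁ hdx
    by_cases hyout : ∀ z ∈ U₁ ∪ U₂, y ⋖ z → P.orient z y = true
    · exact ⟨y, ⟨.inl hyU₁, hdy, hyout⟩, hxy.mono Set.subset_union_left⟩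
    push Not at hyout
    obtain ⟨z, hz | hz, hyz, hoz⟩ := hyout
    · exact absurd (hy z hz hyz) hoz
    obtain ⟨y', hy', hzy'⟩ := ih₂ z hz (by have := P.graded y z hyz; omega)
    exact ⟨y', hout y' hy', (hxy.mono Set.subset_union_left).append hyz (by simpa using hoz)
      (hzy'.mono Set.subset_union_right)⟩
  · obtain ⟨y, hy, hxy⟩ := ih₂ x hx₂ hdx
    exact ⟨y, hout y hy, hxy.mono Set.subset_union_right⟩

theorem IsMolecule.exists_zigZag (hP : IsDirectedComplex P) {U : Set P.carrier}
    (hU : IsMolecule P U) {n : ℕ} (hn : 0 < n) (hd : ∀ y ∈ U, P.dim y ≤ n) {x : P.carrier}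
    (hx : x ∈ U) (hdx : P.dim x = n) : ∃ y ∈ P.sb (n - 1) true U, ZigZag U x y := by
  induction hU generalizing x with
  | atom U hU ht =>
    obtain ⟨t, htU, htop⟩ := ht
    obtain rfl : x = t := eq_of_le_of_dim_le (htop x hx) (hdx ▸ hd t htU)
    exact hdx ▸ exists_zigZag_of_isGreatest hP hU ⟨hx, htop⟩ (hdx ▸ hn)
  | paste U₁ U₂ k hU₁ _ hcap _ _ hne ih₁ ih₂ =>
    exact exists_zigZag_union hU₁.isClosed hcap hne (fun y hy => hd y (.inl hy))
      (fun x hx => ih₁ (fun y hy => hd y (.inl hy)) hx)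
      (fun x hx => ih₂ (fun y hy => hd y (.inr hy)) hx) hx hdx

end

theorem stmt8_general (P : OGP) (hP : IsRegularDC P) (U : Set P.carrier) (n : ℕ) (hn : 0 < n)
    (hU : IsMolecule P U) (hd : ∀ y ∈ U, P.dim y ≤ n)
    (x : P.carrier) (hx : x ∈ U) (hdx : P.dim x = n) :
    ∃ (m : ℕ) (xs ys : ℕ → P.carrier),
      xs 0 = x ∧
      (∀ i ≤ m, xs i ∈ U ∧ P.dim (xs i) = n ∧ ys i ∈ U ∧ P.dim (ys i) = n - 1 ∧
        ys i ⋖ xs i ∧ P.orient (xs i) (ys i) = true) ∧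
      (∀ i < m, ys i ⋖ xs (i + 1) ∧ P.orient (xs (i + 1)) (ys i) = false) ∧
      ys m ∈ P.sb (n - 1) true U := by
  obtain ⟨y, hy, hxy⟩ := hU.exists_zigZag hP.1 hn hd hx hdx
  obtain ⟨m, xs, ys, hxs, rfl, hsteps, hlinks⟩ := hxy.exists_seq
  exact ⟨m, xs, ys, hxs, hdx ▸ hsteps, hlinks, hy⟩

/-- in a regular directed complex, from every `n`-dimensional
element of an `n`-molecule there is a zig-zag path through output/input
faces ending in `Δ⁺U`. -/
theorem stmt8 (P : OGP) (hP : IsRegularDC P) (U : Set P.carrier) (n : ℕ) (hn : 0 < n)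
    (hU : IsMolecule P U) (hd : ∀ y ∈ U, P.dim y ≤ n) (he : ∃ y ∈ U, P.dim y = n)
    (x : P.carrier) (hx : x ∈ U) (hdx : P.dim x = n) :
    ∃ (m : ℕ) (xs ys : ℕ → P.carrier),
      xs 0 = x ∧
      (∀ i ≤ m, xs i ∈ U ∧ P.dim (xs i) = n ∧ ys i ∈ U ∧ P.dim (ys i) = n - 1 ∧
        ys i ⋖ xs i ∧ P.orient (xs i) (ys i) = true) ∧
      (∀ i < m, ys i ⋖ xs (i + 1) ∧ P.orient (xs (i + 1)) (ys i) = false) ∧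
      ys m ∈ P.sb (n - 1) true U :=
  stmt8_general P hP U n hn hU hd x hx hdx
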